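/- In the double D~ of the Jordan plane, for all n ≥ 1: v x^n = x^n v + n x^{n−1}(1 − g) + n x^n u. -/

import Mathlib

/-! Since `v x = x v + c` with `c = (1 - g) + x u` commuting with `x`, moving `v` across `x ^ n`
one factor at a time produces `n` copies of `x ^ (n - 1) c`. -/

theorem mul_pow_succ_of_mul_eq_add {R : Type*} [Semiring R] {v x c : R} (hxc : Commute x c)
    (hvx : v * x = x * v + c) (n : ℕ) :
    v * x ^ (n + 1) = x ^ (n + 1) * v + (n + 1) • (x ^ n * c) := by
  induction n with
  | zero => simpa using hvx
  | succ n ih =>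
    calc v * x ^ (n + 2) = (v * x ^ (n + 1)) * x := by rw [pow_succ, mul_assoc]
      _ = x ^ (n + 1) * (v * x) + (n + 1) • (x ^ n * (c * x)) := by
        rw [ih, add_mul, smul_mul_assoc, mul_assoc, mul_assoc]
      _ = x ^ (n + 2) * v + (x ^ (n + 1) * c + (n + 1) • (x ^ (n + 1) * c)) := by
        rw [hvx, ← hxc.eq, ← mul_assoc, ← pow_succ, mul_add, ← mul_assoc, ← pow_succ, add_assoc]
      _ = x ^ (n + 2) * v + (n + 2) • (x ^ (n + 1) * c) := by rw [← succ_nsmul']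

theorem stmt11 (K : Type*) [Field K]
    (A : Type*) [Ring A] [Algebra K A] (u v g x : A)
    (hgx : g * x = x * g)
    (hvx : v * x = x * v + (1 - g) + x * u) (hux : u * x = x * u)
    (n : ℕ) :
    v * x ^ n = x ^ n * v + (n : K) • (x ^ (n - 1) * (1 - g)) + (n : K) • (x ^ n * u) := by
  have hxg : Commute x g := hgx.symm
  have hxu : Commute x u := hux.symm
  have hxc : Commute x ((1 - g) + x * u) :=
    ((Commute.one_right x).sub_right hxg).add_right ((Commute.refl x).mul_right hxu)
  cases n with
  | zero => simp
  | succ n =>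
    rw [add_assoc] at hvx
    rw [mul_pow_succ_of_mul_eq_add hxc hvx, Nat.cast_smul_eq_nsmul, Nat.cast_smul_eq_nsmul,
      Nat.add_sub_cancel, mul_add, ← mul_assoc, ← pow_succ, smul_add, add_assoc]
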